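/- arXiv:1908.04365 — 6 statements merged into one kernel-verified Lean document; each statement's English description precedes it below -/
import Mathlib

section
/- The formal power series Φ(q) ∈ ℤ[[q]] defined by Φ = (q² + q − 1 + √(q⁴ + 2q³ − q² + 2q + 1))/(2q), i.e., the unique power series solution with constant term 1 of q·Φ² − (q² + q − 1)·Φ − 1 = 0, exists and is unique: there is exactly one F ∈ ℤ[[q]] with F(0) = 1 satisfying q·F² − (q² + q − 1)·F − 1 = 0. -/
/-!
Multiplying `X·F² + b·F + c = 0` by `X` turns it into the monic equation `G² + b·G + X·c = 0`
for `G = X·F`. Modulo `X` this has the simple root `0`, since its derivative there is `b`, whose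
constant coefficient is a unit; `R⟦X⟧` is `X`-adically complete, so Hensel's lemma lifts that root
to a `G` divisible by `X`. Uniqueness: the difference of two roots `F, G` satisfies
`(F - G)·(X·(F + G) + b) = 0`, and the second factor is a unit.
-/

open PowerSeries

namespace PowerSeries

variable {R : Type*} [CommRing R] {b : R⟦X⟧}

theorem exists_X_mul_sq_add_mul_add_eq_zero (hb : IsUnit (constantCoeff b)) (c : R⟦X⟧) :
    ∃ F : R⟦X⟧, X * F ^ 2 + b * F + c = 0 := by
  set f : Polynomial R⟦X⟧ :=
    Polynomial.X ^ 2 + Polynomial.C b * Polynomial.X + Polynomial.C (X * c)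
  have hf : f.Monic := by
    unfold f
    monicity!
  have hf₀ : f.eval 0 ∈ Ideal.span {(X : R⟦X⟧)} := by
    simp [f, Ideal.mem_span_singleton]
  have hf'₀ : IsUnit (Ideal.Quotient.mk (Ideal.span {(X : R⟦X⟧)}) (f.derivative.eval 0)) := by
    refine IsUnit.map _ (isUnit_iff_constantCoeff.mpr ?_)
    simpa [f] using hb
  obtain ⟨G, hG, hGX⟩ := HenselianRing.is_henselian f hf 0 hf₀ hf'₀
  obtain ⟨F, rfl⟩ := Ideal.mem_span_singleton.mp (sub_zero G ▸ hGX)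
  have hroot : (X * F) ^ 2 + b * (X * F) + X * c = 0 := by simpa [f] using hG.eq_zero
  exact ⟨F, X_mul_cancel (by linear_combination hroot)⟩

theorem eq_of_X_mul_sq_add_mul_add_eq_zero (hb : IsUnit (constantCoeff b)) {c F G : R⟦X⟧}
    (hF : X * F ^ 2 + b * F + c = 0) (hG : X * G ^ 2 + b * G + c = 0) : F = G := by
  have hunit : IsUnit (X * (F + G) + b) := isUnit_iff_constantCoeff.mpr (by simpa using hb)
  have hprod : (F - G) * (X * (F + G) + b) = 0 := by linear_combination hF - hG
  exact sub_eq_zero.mp (hunit.mul_left_eq_zero.mp hprod)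

end PowerSeries

/-- There is exactly one formal power series `F ∈ ℤ[[q]]` with constant term `1`
satisfying `q·F² − (q² + q − 1)·F − 1 = 0` (the `q`-deformed golden ratio). -/
theorem q_golden_ratio_exists_unique :
    ∃! F : PowerSeries ℤ, constantCoeff F = 1 ∧
      X * F ^ 2 - (X ^ 2 + X - 1) * F - 1 = 0 := by
  have hb : IsUnit (constantCoeff (-(X ^ 2 + X - 1) : PowerSeries ℤ)) := by simp
  have hform (F : PowerSeries ℤ) : X * F ^ 2 - (X ^ 2 + X - 1) * F - 1 = 0 ↔
      X * F ^ 2 + -(X ^ 2 + X - 1) * F + -1 = 0 := by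
    rw [neg_mul, ← sub_eq_add_neg, ← sub_eq_add_neg]
  obtain ⟨F, hF⟩ := exists_X_mul_sq_add_mul_add_eq_zero hb (-1)
  refine ⟨F, ⟨?_, (hform F).mpr hF⟩, fun G hG ↦
    eq_of_X_mul_sq_add_mul_add_eq_zero hb ((hform G).mp hG.2) hF⟩
  simpa [sub_eq_zero] using congrArg constantCoeff ((hform F).mpr hF)
end

section
/- The power series solution F ∈ ℤ[[q]] with F(0)=1 of q·F² − (q²+q−1)·F − 1 = 0 has integer coefficients, and its first coefficients are 1, 0, 1, −1, 2, −4, 8, −17, 37, −82, 185 (i.e., F = 1 + q² − q³ + 2q⁴ − 4q⁵ + 8q⁶ − 17q⁷ + 37q⁸ − 82q⁹ + 185q¹⁰ + O(q¹¹)). -/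
/-!
Rewriting the equation as `F = 1 + X (F + X F - F²)` expresses every coefficient of `F` as an
integer polynomial in the earlier ones, so all of them are integers.

For the values, use the defect `D(G) = X G² - (X² + X - 1) G - 1`:
`D(F) - D(G) = (F - G) (X (F + G) - X² - X + 1)`, and the second factor has constant term `1`, so
it is a unit. Hence a solution `F` agrees with `G` modulo `Xᵏ` as soon as `Xᵏ ∣ D(G)`, and
the polynomial `1 + X² - X³ + ⋯ + 185 X¹⁰` has defect divisible by `X¹¹`.
-/

open PowerSeries

namespace PowerSeries

variable {R : Type*} [CommRing R]

theorem coeff_mul_mem_of_forall_le {S : Subring R} {F G : R⟦X⟧} {n : ℕ}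
    (hF : ∀ i ≤ n, coeff i F ∈ S) (hG : ∀ i ≤ n, coeff i G ∈ S) : coeff n (F * G) ∈ S := by
  rw [coeff_mul]
  exact S.sum_mem fun p hp => S.mul_mem (hF _ (Finset.HasAntidiagonal.antidiagonal.fst_le hp))
    (hG _ (Finset.HasAntidiagonal.antidiagonal.snd_le hp))

theorem coeff_eq_of_X_pow_dvd_sub {F G : R⟦X⟧} {k : ℕ} (h : X ^ k ∣ F - G) {n : ℕ}
    (hn : n < k) : coeff n F = coeff n G := by
  rw [← sub_eq_zero, ← map_sub, X_pow_dvd_iff.mp h n hn]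

end PowerSeries

namespace QGoldenRatio

variable {R : Type*} [CommRing R]

noncomputable def defect (F : R⟦X⟧) : R⟦X⟧ := X * F ^ 2 - (X ^ 2 + X - 1) * F - 1

theorem defect_sub_defect (F G : R⟦X⟧) :
    defect F - defect G = (F - G) * (X * (F + G) - (X ^ 2 + X - 1)) := by
  unfold defect; ring

theorem X_pow_dvd_sub_iff {F : R⟦X⟧} (hF : defect F = 0) (G : R⟦X⟧) (k : ℕ) :
    X ^ k ∣ F - G ↔ X ^ k ∣ defect G := by
  have hunit : IsUnit (X * (F + G) - (X ^ 2 + X - 1)) := by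
    rw [isUnit_iff_constantCoeff]; simp
  rw [← hunit.dvd_mul_right, ← defect_sub_defect, hF, zero_sub, dvd_neg]

theorem eq_one_add_X_mul {F : R⟦X⟧} (hF : defect F = 0) :
    F = 1 + X * (F + X * F - F * F) := by
  unfold defect at hF; linear_combination hF

theorem coeff_mem (S : Subring R) {F : R⟦X⟧} (hF : defect F = 0) (n : ℕ) :
    coeff n F ∈ S := by
  induction n using Nat.strong_induction_on with
  | _ n ih =>
    rw [eq_one_add_X_mul hF]
    rcases n with _ | n
    · simp [S.one_mem]
    have hX : ∀ i ≤ n, coeff i (X : R⟦X⟧) ∈ S := fun i _ => by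
      rw [coeff_X]; split_ifs
      exacts [S.one_mem, S.zero_mem]
    have hF' : ∀ i ≤ n, coeff i F ∈ S := fun i hi => ih i (by omega)
    rw [map_add, coeff_succ_X_mul, coeff_one, if_neg n.succ_ne_zero, zero_add, map_sub, map_add]
    exact S.sub_mem (S.add_mem (hF' n le_rfl) (coeff_mul_mem_of_forall_le hX hF'))
      (coeff_mul_mem_of_forall_le hF' hF')

end QGoldenRatio

theorem q_golden_ratio_coeffs_general (F : PowerSeries ℚ)
    (heq : X * F ^ 2 - (X ^ 2 + X - 1) * F - 1 = 0) :
    (∀ n : ℕ, ∃ m : ℤ, coeff n F = (m : ℚ)) ∧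
    coeff 0 F = 1 ∧ coeff 1 F = 0 ∧ coeff 2 F = 1 ∧ coeff 3 F = -1 ∧
    coeff 4 F = 2 ∧ coeff 5 F = -4 ∧ coeff 6 F = 8 ∧ coeff 7 F = -17 ∧
    coeff 8 F = 37 ∧ coeff 9 F = -82 ∧ coeff 10 F = 185 := by
  refine ⟨fun n => ?_, ?_⟩
  · obtain ⟨m, hm⟩ := QGoldenRatio.coeff_mem (Int.castRingHom ℚ).range heq n
    exact ⟨m, hm.symm⟩
  set P : ℚ⟦X⟧ := 1 + X ^ 2 - X ^ 3 + 2 * X ^ 4 - 4 * X ^ 5 + 8 * X ^ 6 - 17 * X ^ 7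
    + 37 * X ^ 8 - 82 * X ^ 9 + 185 * X ^ 10 with hP
  have hdefect : QGoldenRatio.defect P = X ^ 11 * (423 - 555 * X + 882 * X ^ 2 - 1266 * X ^ 3
      + 2277 * X ^ 4 - 4050 * X ^ 5 + 7117 * X ^ 6 - 12358 * X ^ 7 + 20414 * X ^ 8
      - 30340 * X ^ 9 + 34225 * X ^ 10) := by
    rw [QGoldenRatio.defect, hP]; ring
  have hFP : X ^ 11 ∣ F - P := (QGoldenRatio.X_pow_dvd_sub_iff heq P 11).mpr (Dvd.intro _ hdefect.symm)
  simp (disch := omega) only [coeff_eq_of_X_pow_dvd_sub hFP]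
  simp only [hP, ← map_ofNat (C (R := ℚ)), map_add, map_sub, coeff_C_mul, coeff_X_pow, coeff_one]
  norm_num

/-- The power series solution `F` with constant term `1` of
`q·F² − (q²+q−1)·F − 1 = 0` has integer coefficients, and its first coefficients
are `1, 0, 1, −1, 2, −4, 8, −17, 37, −82, 185`. -/
theorem q_golden_ratio_coeffs (F : PowerSeries ℚ)
    (h0 : constantCoeff F = 1)
    (heq : X * F ^ 2 - (X ^ 2 + X - 1) * F - 1 = 0) :
    (∀ n : ℕ, ∃ m : ℤ, coeff n F = (m : ℚ)) ∧
    coeff 0 F = 1 ∧ coeff 1 F = 0 ∧ coeff 2 F = 1 ∧ coeff 3 F = -1 ∧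
    coeff 4 F = 2 ∧ coeff 5 F = -4 ∧ coeff 6 F = 8 ∧ coeff 7 F = -17 ∧
    coeff 8 F = 37 ∧ coeff 9 F = -82 ∧ coeff 10 F = 185 :=
  q_golden_ratio_coeffs_general F heq
end

section
/- The coefficients φ_k of the q-deformed golden ratio satisfy, for all k ≥ 4, the linear recurrence (k+1)·φ_k + (2k−1)·φ_{k−1} + (2−k)·φ_{k−2} + (2k−7)·φ_{k−3} + (k−5)·φ_{k−4} = 0. -/
/-!
Writing `P = X² + X - 1`, the equation says `(2XF - P)² = D` with `D = P² + 4X`. Differentiating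
gives `2D(2XF - P)' = D'(2XF - P)`, a first-order linear ODE for `F` with polynomial coefficients.
Multiplying it by `X` turns `d/dX` into the Euler operator `X d/dX`, which acts on the `k`-th
coefficient as multiplication by `k`, and reading off the coefficient of `X^k` gives the recurrence.
-/

open PowerSeries

variable {R : Type*}

namespace PowerSeries

theorem coeff_X_mul' [Semiring R] (f : R⟦X⟧) (n : ℕ) :
    coeff n (X * f) = if 1 ≤ n then coeff (n - 1) f else 0 := by
  simpa using coeff_X_pow_mul' f 1 n

theorem coeff_X_mul_derivative [CommSemiring R] (f : R⟦X⟧) (n : ℕ) :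
    coeff n (X * d⁄dX R f) = n * coeff n f := by
  cases n with
  | zero => simp
  | succ n => rw [coeff_succ_X_mul, coeff_derivative]; push_cast; ring

end PowerSeries

theorem X_mul_derivative_eq_of_q_golden_ratio [CommRing R] {F : R⟦X⟧}
    (h : X * F ^ 2 - (X ^ 2 + X - 1) * F - 1 = 0) :
    (X ^ 4 + 2 * X ^ 3 - X ^ 2 + 2 * X + 1) * (X * d⁄dX R F)
      = (X ^ 4 + X ^ 3 - X - 1) * F + (3 * X ^ 2 + X + 1) := by
  have hd := congrArg (d⁄dX R) h
  simp only [map_sub, map_add, map_zero, Derivation.leibniz, Derivation.leibniz_pow,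
    derivative_X, Derivation.map_one_eq_zero, smul_eq_mul] at hd
  -- The header's ODE divided by `4`; combining `h` and `hd` directly avoids the division.
  linear_combination (-2 * X * F + 3 * X ^ 2 + X + 1 - 4 * X ^ 2 * d⁄dX R F) * h
      + (2 * X ^ 2 * F - X ^ 3 - X ^ 2 + X) * hd

theorem q_golden_ratio_recurrence_general (F : PowerSeries ℤ)
    (heq : X * F ^ 2 - (X ^ 2 + X - 1) * F - 1 = 0) :
    ∀ k : ℕ, 4 ≤ k →
      ((k : ℤ) + 1) * coeff k F + (2 * (k : ℤ) - 1) * coeff (k - 1) F +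
        (2 - (k : ℤ)) * coeff (k - 2) F + (2 * (k : ℤ) - 7) * coeff (k - 3) F +
        ((k : ℤ) - 5) * coeff (k - 4) F = 0 := by
  intro k hk
  have two : (2 : ℤ⟦X⟧) = C 2 := rfl
  have three : (3 : ℤ⟦X⟧) = C 3 := rfl
  have hcoeff := congrArg (coeff k) (X_mul_derivative_eq_of_q_golden_ratio heq)
  generalize hG : X * d⁄dX ℤ F = G at hcoeff
  simp (disch := omega) only [two, three, add_mul, sub_mul, one_mul, mul_assoc, map_add, map_sub,
    coeff_C_mul, coeff_X_pow_mul', coeff_X_mul', coeff_X_pow, coeff_X, coeff_one, if_pos,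
    if_neg] at hcoeff
  simp (disch := omega) only [← hG, coeff_X_mul_derivative, Nat.cast_sub] at hcoeff
  push_cast at hcoeff
  linear_combination hcoeff

/-- The coefficients `φ_k` of the `q`-deformed golden ratio satisfy, for all `k ≥ 4`,
the linear recurrence
`(k+1)·φ_k + (2k−1)·φ_{k−1} + (2−k)·φ_{k−2} + (2k−7)·φ_{k−3} + (k−5)·φ_{k−4} = 0`. -/
theorem q_golden_ratio_recurrence (F : PowerSeries ℤ)
    (h0 : constantCoeff F = 1)
    (heq : X * F ^ 2 - (X ^ 2 + X - 1) * F - 1 = 0) :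
    ∀ k : ℕ, 4 ≤ k →
      ((k : ℤ) + 1) * coeff k F + (2 * (k : ℤ) - 1) * coeff (k - 1) F +
        (2 - (k : ℤ)) * coeff (k - 2) F + (2 * (k : ℤ) - 7) * coeff (k - 3) F +
        ((k : ℤ) - 5) * coeff (k - 4) F = 0 :=
  q_golden_ratio_recurrence_general F heq
end

section
/- The power series S ∈ ℤ[[q]] with S(0)=1 satisfying q·S² − (q³ + 2q − 1)·S − 1 = 0 exists and is unique in ℚ[[q]]: there is exactly one formal power series with constant term 1 solving this equation, and its coefficients are integers. -/
/-!
Substituting `V = X S` turns `X S² - b S - c = 0` into the monic equation `V² - b V - X c = 0`,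
which has the simple root `0` modulo `X` as soon as the constant coefficient of `b` is a unit;
Hensel's lemma in the `X`-adically complete ring `R⟦X⟧` lifts it to a root divisible by `X`.
Two solutions `S`, `T` satisfy `(X (S + T) - b) (S - T) = 0` with a unit first factor, so the
solution is unique. Hence the solution over `ℤ`, mapped to `ℚ`, is the solution over `ℚ`.
-/

open PowerSeries

namespace PowerSeries

variable {R : Type*} [CommRing R]

theorem eq_of_X_mul_sq_sub_mul_sub_eq_zero {b c S T : R⟦X⟧} (hb : IsUnit (constantCoeff b))
    (hS : X * S ^ 2 - b * S - c = 0) (hT : X * T ^ 2 - b * T - c = 0) : S = T := by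
  have hunit : IsUnit (X * (S + T) - b) := by
    rw [isUnit_iff_constantCoeff]
    simpa using hb.neg
  have hfac : (X * (S + T) - b) * (S - T) = 0 := by linear_combination hS - hT
  exact sub_eq_zero.1 (hunit.mul_right_eq_zero.1 hfac)

theorem exists_X_mul_sq_sub_mul_sub_eq_zero {b : R⟦X⟧} (hb : IsUnit (constantCoeff b))
    (c : R⟦X⟧) : ∃ S : R⟦X⟧, X * S ^ 2 - b * S - c = 0 := by
  let f : Polynomial R⟦X⟧ :=
    Polynomial.X ^ 2 - Polynomial.C b * Polynomial.X - Polynomial.C (X * c)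
  have hf : f.Monic := by unfold f; monicity!
  have hf0 : f.eval 0 ∈ Ideal.span {X} := by simp [f, Ideal.mem_span_singleton]
  have hf'0 : IsUnit (Ideal.Quotient.mk (Ideal.span {X}) (f.derivative.eval 0)) := by
    simpa [f] using
      (isUnit_iff_constantCoeff.2 hb).neg.map (Ideal.Quotient.mk (Ideal.span {X}))
  obtain ⟨V, hV, hVX⟩ := HenselianRing.is_henselian f hf 0 hf0 hf'0
  obtain ⟨S, rfl⟩ := Ideal.mem_span_singleton.1 (by simpa using hVX)
  have hXS : (X * S) ^ 2 - b * (X * S) - X * c = 0 := by simpa [f] using hV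
  exact ⟨S, X_mul_cancel (by linear_combination hXS)⟩

end PowerSeries

/-- The `q`-deformed silver ratio: there is exactly one formal power series in `ℚ[[q]]`
with constant term `1` satisfying `q·S² − (q³ + 2q − 1)·S − 1 = 0`, and its
coefficients are integers. -/
theorem q_silver_ratio_exists_unique :
    (∃! S : PowerSeries ℚ, constantCoeff S = 1 ∧
        X * S ^ 2 - (X ^ 3 + 2 * X - 1) * S - 1 = 0) ∧
    (∀ S : PowerSeries ℚ, constantCoeff S = 1 →
        X * S ^ 2 - (X ^ 3 + 2 * X - 1) * S - 1 = 0 →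
        ∀ n : ℕ, ∃ m : ℤ, coeff n S = (m : ℚ)) := by
  have hb {R : Type} [CommRing R] : IsUnit (constantCoeff (X ^ 3 + 2 * X - 1 : R⟦X⟧)) := by
    simp
  obtain ⟨S, hS⟩ := exists_X_mul_sq_sub_mul_sub_eq_zero (R := ℚ) hb 1
  have hS₀ : constantCoeff S = 1 := by
    have := congrArg constantCoeff hS
    simp only [map_sub, map_mul, map_pow, map_add, map_ofNat, constantCoeff_X, map_one,
      map_zero] at this
    linear_combination this
  refine ⟨⟨S, ⟨hS₀, hS⟩, fun T hT ↦ eq_of_X_mul_sq_sub_mul_sub_eq_zero hb hT.2 hS⟩, ?_⟩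
  intro T _ hT n
  obtain ⟨U, hU⟩ := exists_X_mul_sq_sub_mul_sub_eq_zero (R := ℤ) hb 1
  have hUℚ : X * (map (Int.castRingHom ℚ) U) ^ 2 -
      (X ^ 3 + 2 * X - 1) * map (Int.castRingHom ℚ) U - 1 = 0 := by
    simpa [map_ofNat] using congrArg (map (Int.castRingHom ℚ)) hU
  exact ⟨coeff n U, by rw [eq_of_X_mul_sq_sub_mul_sub_eq_zero hb hT hUℚ, coeff_map]; rfl⟩
end

section
/- There is a unique formal power series T ∈ ℚ[[q]] with constant term 1 satisfying q²·T² − (q³ + q² − q − 1)·T = q² + q + 1, and this T has integer coefficients beginning T = 1 + q² − q⁴ + 2q⁵ − 2q⁶ − q⁷ + O(q⁸). -/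
/-!
Written as `T = 1 + q + q² − q²T² + (q³ + q² − q)T`, the equation determines the coefficient
of `qⁿ` from those of lower degree by an integer recursion, so it has a solution over `ℤ`.
Any two solutions `S`, `T` satisfy `(S − T)(q²(S + T) − (q³ + q² − q − 1)) = 0`, and the
second factor has constant coefficient `1`, hence is a unit: the solution is unique over
every commutative ring.
-/

open PowerSeries Finset

def IsQSqrtThree {R : Type*} [CommRing R] (T : R⟦X⟧) : Prop :=
  X ^ 2 * T ^ 2 - (X ^ 3 + X ^ 2 - X - 1) * T = X ^ 2 + X + 1

namespace IsQSqrtThree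

variable {R : Type*} [CommRing R]

theorem eq {S T : R⟦X⟧} (hS : IsQSqrtThree S) (hT : IsQSqrtThree T) : S = T := by
  have hfactor : (S - T) * (X ^ 2 * (S + T) - (X ^ 3 + X ^ 2 - X - 1)) = 0 := by
    unfold IsQSqrtThree at hS hT
    linear_combination hS - hT
  have hunit : IsUnit (X ^ 2 * (S + T) - (X ^ 3 + X ^ 2 - X - 1) : R⟦X⟧) :=
    isUnit_iff_constantCoeff.mpr (by simp)
  exact sub_eq_zero.mp (hunit.mul_left_eq_zero.mp hfactor)

theorem map {S : Type*} [CommRing S] {T : R⟦X⟧} (hT : IsQSqrtThree T) (f : R →+* S) :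
    IsQSqrtThree (PowerSeries.map f T) := by
  simpa [IsQSqrtThree] using congrArg (PowerSeries.map f) hT

end IsQSqrtThree

def qSqrtThreeCoeff : ℕ → ℤ
  | 0 => 1
  | 1 => 0
  | 2 => 1
  | n + 3 =>
      -(∑ p ∈ (antidiagonal (n + 1)).attach, qSqrtThreeCoeff p.1.1 * qSqrtThreeCoeff p.1.2)
        - qSqrtThreeCoeff (n + 2) + qSqrtThreeCoeff (n + 1) + qSqrtThreeCoeff n
decreasing_by
  all_goals first
    | (have := mem_antidiagonal.mp p.2; omega)
    | omega

theorem qSqrtThreeCoeff_add_three (n : ℕ) :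
    qSqrtThreeCoeff (n + 3) =
      -(∑ p ∈ antidiagonal (n + 1), qSqrtThreeCoeff p.1 * qSqrtThreeCoeff p.2)
        - qSqrtThreeCoeff (n + 2) + qSqrtThreeCoeff (n + 1) + qSqrtThreeCoeff n := by
  rw [qSqrtThreeCoeff,
    sum_attach (antidiagonal (n + 1)) fun p => qSqrtThreeCoeff p.1 * qSqrtThreeCoeff p.2]

def qSqrtThree : ℤ⟦X⟧ := mk qSqrtThreeCoeff

theorem coeff_qSqrtThree_add_three (n : ℕ) :
    coeff (n + 3) qSqrtThree = -coeff (n + 1) (qSqrtThree ^ 2) - coeff (n + 2) qSqrtThree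
      + coeff (n + 1) qSqrtThree + coeff n qSqrtThree := by
  simp [qSqrtThree, sq, coeff_mul, qSqrtThreeCoeff_add_three]

theorem isQSqrtThree_qSqrtThree : IsQSqrtThree qSqrtThree := by
  suffices hfix : qSqrtThree =
      1 + X + X ^ 2 - X ^ 2 * qSqrtThree ^ 2 + (X ^ 3 + X ^ 2 - X) * qSqrtThree by
    unfold IsQSqrtThree
    linear_combination hfix
  ext n
  rcases n with _ | _ | _ | n
  · simp [qSqrtThree, qSqrtThreeCoeff]
  · simp [qSqrtThree, qSqrtThreeCoeff, coeff_X_pow_mul', coeff_X, add_mul, sub_mul]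
  · simp [qSqrtThree, qSqrtThreeCoeff, coeff_X_pow_mul', coeff_X, add_mul, sub_mul, coeff_X_pow]
  · simp only [coeff_qSqrtThree_add_three, sub_mul, add_mul, map_add, map_sub, coeff_one, coeff_X,
      coeff_X_pow, coeff_X_pow_mul', coeff_succ_X_mul, Nat.add_eq_zero_iff, Nat.add_eq_right,
      Nat.reduceEqDiff, Nat.reduceSubDiff, le_add_iff_nonneg_left, zero_le, one_ne_zero, and_false,
      and_self, ↓reduceIte, add_zero, zero_sub]
    ring

/-- There is a unique formal power series `T ∈ ℚ[[q]]` with constant term `1`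
satisfying `q²·T² − (q³ + q² − q − 1)·T = q² + q + 1` (the `q`-deformation of `√3`);
it has integer coefficients, beginning `1 + q² − q⁴ + 2q⁵ − 2q⁶ − q⁷ + O(q⁸)`. -/
theorem q_sqrt_three :
    (∃! T : PowerSeries ℚ, constantCoeff T = 1 ∧
        X ^ 2 * T ^ 2 - (X ^ 3 + X ^ 2 - X - 1) * T = X ^ 2 + X + 1) ∧
    (∀ T : PowerSeries ℚ, constantCoeff T = 1 →
        X ^ 2 * T ^ 2 - (X ^ 3 + X ^ 2 - X - 1) * T = X ^ 2 + X + 1 →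
        (∀ n : ℕ, ∃ m : ℤ, coeff n T = (m : ℚ)) ∧
        coeff 0 T = 1 ∧ coeff 1 T = 0 ∧ coeff 2 T = 1 ∧ coeff 3 T = 0 ∧
        coeff 4 T = -1 ∧ coeff 5 T = 2 ∧ coeff 6 T = -2 ∧ coeff 7 T = -1) := by
  set T₀ : ℚ⟦X⟧ := PowerSeries.map (Int.castRingHom ℚ) qSqrtThree
  have hT₀ : IsQSqrtThree T₀ := isQSqrtThree_qSqrtThree.map _
  have hcoeff (n : ℕ) : coeff n T₀ = qSqrtThreeCoeff n := by simp [T₀, qSqrtThree]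
  have hconst : constantCoeff T₀ = 1 := by
    simp [← coeff_zero_eq_constantCoeff_apply, hcoeff, qSqrtThreeCoeff]
  refine ⟨⟨T₀, ⟨hconst, hT₀⟩, fun T hT => IsQSqrtThree.eq hT.2 hT₀⟩, fun T _ hT => ?_⟩
  obtain rfl : T = T₀ := IsQSqrtThree.eq hT hT₀
  simp only [hcoeff]
  refine ⟨fun n => ⟨_, rfl⟩, ?_⟩
  norm_num [qSqrtThreeCoeff_add_three, Nat.sum_antidiagonal_succ, qSqrtThreeCoeff]
end

section
/- There is a unique formal power series V ∈ ℚ[[q]] with constant term 1 satisfying q³·V² − (q⁵ + q³ − q² − 1)·V = q⁴ + q³ + q² + q + 1, and V has integer coefficients with V = 1 + q + q⁶ − q⁸ − q⁹ − q¹⁰ + O(q¹¹). -/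
open PowerSeries Function

/-!
Rewriting the equation as `V = Φ V` with
`Φ V = 1 + q + q² + q³ + q⁴ + q³V + q⁵V − q²V − q³V²`, the map `Φ` is a contraction for the
`q`-adic metric: `Φ V − Φ W` is divisible by `q (V − W)`. So over every commutative ring `Φ` has
exactly one fixed point, whose `n`-th coefficient is determined by the lower ones. The fixed point
over `ℤ` maps to the one over `ℚ`, which gives integrality, and any `T` with `q¹¹ ∣ Φ T − T`
agrees with the fixed point up to `O(q¹¹)`.
-/

section Contraction

variable {R : Type*} [CommRing R]

def IsXAdicContraction (F : R⟦X⟧ → R⟦X⟧) : Prop :=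
  ∀ V W, X * (V - W) ∣ F V - F W

namespace IsXAdicContraction

variable {F : R⟦X⟧ → R⟦X⟧}

theorem X_pow_succ_dvd (hF : IsXAdicContraction F) {V W : R⟦X⟧} {n : ℕ}
    (h : X ^ n ∣ V - W) : X ^ (n + 1) ∣ F V - F W :=
  (pow_succ' (X : R⟦X⟧) n ▸ mul_dvd_mul_left X h).trans (hF V W)

theorem coeff_eq (hF : IsXAdicContraction F) {V W : R⟦X⟧} {n : ℕ} (h : X ^ n ∣ V - W) :
    coeff n (F V) = coeff n (F W) := by
  rw [← sub_eq_zero, ← map_sub]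
  exact X_pow_dvd_iff.1 (hF.X_pow_succ_dvd h) n n.lt_succ_self

theorem X_pow_dvd_sub (hF : IsXAdicContraction F) {V T : R⟦X⟧} {N : ℕ} (hV : IsFixedPt F V)
    (hT : X ^ N ∣ F T - T) : X ^ N ∣ V - T := by
  suffices ∀ k ≤ N, X ^ k ∣ V - T from this N le_rfl
  intro k hk
  induction k with
  | zero => simp
  | succ k ih =>
    have hsplit : V - T = (F V - F T) + (F T - T) := by rw [hV]; ring
    rw [hsplit]
    exact dvd_add (hF.X_pow_succ_dvd (ih (by omega))) ((pow_dvd_pow X hk).trans hT)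

theorem eq_of_isFixedPt (hF : IsXAdicContraction F) {V W : R⟦X⟧} (hV : IsFixedPt F V)
    (hW : IsFixedPt F W) : V = W := by
  ext n
  rw [← sub_eq_zero, ← map_sub]
  exact X_pow_dvd_iff.1 (hF.X_pow_dvd_sub hV (by rw [hW, sub_self]; exact dvd_zero _))
    n n.lt_succ_self

end IsXAdicContraction

noncomputable def fixedPointCoeff (F : R⟦X⟧ → R⟦X⟧) : ℕ → R
  | n => coeff n (F (mk fun m => if m < n then fixedPointCoeff F m else 0))

noncomputable def fixedPoint (F : R⟦X⟧ → R⟦X⟧) : R⟦X⟧ :=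
  mk (fixedPointCoeff F)

theorem IsXAdicContraction.isFixedPt_fixedPoint {F : R⟦X⟧ → R⟦X⟧}
    (hF : IsXAdicContraction F) : IsFixedPt F (fixedPoint F) := by
  ext n
  rw [fixedPoint, coeff_mk, fixedPointCoeff]
  refine hF.coeff_eq (X_pow_dvd_iff.2 fun m hm => ?_)
  simp [hm]

end Contraction

section QSqrtFive

variable {R : Type*} [CommRing R]

noncomputable def qSqrtFiveStep (V : R⟦X⟧) : R⟦X⟧ :=
  X ^ 4 + X ^ 3 + X ^ 2 + X + 1 + X ^ 3 * V + X ^ 5 * V - X ^ 2 * V - X ^ 3 * V ^ 2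

theorem isFixedPt_qSqrtFiveStep_iff (V : R⟦X⟧) :
    IsFixedPt qSqrtFiveStep V ↔
      X ^ 3 * V ^ 2 - (X ^ 5 + X ^ 3 - X ^ 2 - 1) * V = X ^ 4 + X ^ 3 + X ^ 2 + X + 1 := by
  rw [IsFixedPt, qSqrtFiveStep]
  constructor <;> intro h <;> linear_combination -h

theorem isXAdicContraction_qSqrtFiveStep : IsXAdicContraction (qSqrtFiveStep (R := R)) :=
  fun V W => ⟨-X + X ^ 2 + X ^ 4 - X ^ 2 * (V + W), by unfold qSqrtFiveStep; ring⟩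

theorem map_qSqrtFiveStep {S : Type*} [CommRing S] (f : R →+* S) (V : R⟦X⟧) :
    map f (qSqrtFiveStep V) = qSqrtFiveStep (map f V) := by
  simp [qSqrtFiveStep]

noncomputable def qSqrtFiveTrunc : R⟦X⟧ := 1 + X + X ^ 6 - X ^ 8 - X ^ 9 - X ^ 10

theorem X_pow_eleven_dvd_qSqrtFiveStep_trunc :
    X ^ 11 ∣ qSqrtFiveStep (qSqrtFiveTrunc : R⟦X⟧) - qSqrtFiveTrunc :=
  ⟨3 + 4 * X + 2 * X ^ 2 + X ^ 3 - 2 * X ^ 4 + 2 * X ^ 6 + 2 * X ^ 7 + X ^ 8 - 2 * X ^ 9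
    - 3 * X ^ 10 - 2 * X ^ 11 - X ^ 12, by unfold qSqrtFiveStep qSqrtFiveTrunc; ring⟩

theorem coeff_eq_coeff_qSqrtFiveTrunc {V : R⟦X⟧} (hV : IsFixedPt qSqrtFiveStep V) {n : ℕ}
    (hn : n < 11) : coeff n V = coeff n (qSqrtFiveTrunc : R⟦X⟧) := by
  rw [← sub_eq_zero, ← map_sub]
  exact X_pow_dvd_iff.1
    (isXAdicContraction_qSqrtFiveStep.X_pow_dvd_sub hV X_pow_eleven_dvd_qSqrtFiveStep_trunc) n hn

end QSqrtFive

/-- There is a unique formal power series `V ∈ ℚ[[q]]` with constant term `1`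
satisfying `q³·V² − (q⁵ + q³ − q² − 1)·V = q⁴ + q³ + q² + q + 1`
(the `q`-deformation of `√5`); it has integer coefficients, with
`V = 1 + q + q⁶ − q⁸ − q⁹ − q¹⁰ + O(q¹¹)`. -/
theorem q_sqrt_five :
    (∃! V : PowerSeries ℚ, constantCoeff V = 1 ∧
        X ^ 3 * V ^ 2 - (X ^ 5 + X ^ 3 - X ^ 2 - 1) * V = X ^ 4 + X ^ 3 + X ^ 2 + X + 1) ∧
    (∀ V : PowerSeries ℚ, constantCoeff V = 1 →
        X ^ 3 * V ^ 2 - (X ^ 5 + X ^ 3 - X ^ 2 - 1) * V = X ^ 4 + X ^ 3 + X ^ 2 + X + 1 →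
        (∀ n : ℕ, ∃ m : ℤ, coeff n V = (m : ℚ)) ∧
        coeff 0 V = 1 ∧ coeff 1 V = 1 ∧ coeff 2 V = 0 ∧ coeff 3 V = 0 ∧
        coeff 4 V = 0 ∧ coeff 5 V = 0 ∧ coeff 6 V = 1 ∧ coeff 7 V = 0 ∧
        coeff 8 V = -1 ∧ coeff 9 V = -1 ∧ coeff 10 V = -1) := by
  set W : ℤ⟦X⟧ := fixedPoint qSqrtFiveStep
  have hW : IsFixedPt qSqrtFiveStep (map (Int.castRingHom ℚ) W) := by
    rw [IsFixedPt, ← map_qSqrtFiveStep, isXAdicContraction_qSqrtFiveStep.isFixedPt_fixedPoint]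
  have hcoeff {n : ℕ} (hn : n < 11) := coeff_eq_coeff_qSqrtFiveTrunc hW hn
  have hunique {V : ℚ⟦X⟧} (hV : IsFixedPt qSqrtFiveStep V) : V = map (Int.castRingHom ℚ) W :=
    isXAdicContraction_qSqrtFiveStep.eq_of_isFixedPt hV hW
  refine ⟨⟨map (Int.castRingHom ℚ) W, ⟨?_, (isFixedPt_qSqrtFiveStep_iff _).1 hW⟩,
    fun V hV => hunique ((isFixedPt_qSqrtFiveStep_iff V).2 hV.2)⟩, fun V _ hV => ?_⟩
  · rw [← coeff_zero_eq_constantCoeff_apply, hcoeff (by norm_num)]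
    simp [qSqrtFiveTrunc]
  · obtain rfl := hunique ((isFixedPt_qSqrtFiveStep_iff V).2 hV)
    refine ⟨fun n => ⟨coeff n W, by simp⟩, ?_⟩
    simp only [hcoeff, Nat.reduceLT]
    simp [qSqrtFiveTrunc, coeff_X_pow, coeff_X, coeff_one]
end
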